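/- arXiv:1810.01634 — 2 statements merged into one kernel-verified Lean document; each statement's English description precedes it below -/
import Mathlib

section
/- Let a ∈ ℤ[α] have coefficient vector (a_0, a_1, …, a_{m−1}) and let s be a positive integer. Let b := a − s·⌊a/s⌋ (where ⌊·⌋ denotes the floor of the real number a/s), so that b ∈ ℤ[α] has coefficient vector (a_0 − s⌊a/s⌋, a_1, …, a_{m−1}). Then opc(b) ≤ max(opc(a), s)·S_α, where S_α := 1 + |α| + ⋯ + |α|^{m−1}. The same bound holds for a − s·⌈a/s⌉. -/
open Polynomial Finset

/-- `S_α = 1 + |α| + ⋯ + |α|^{m-1}`. -/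
noncomputable def Salpha (m : ℕ) (α : ℝ) : ℝ := ∑ k ∈ Finset.range m, |α| ^ k

/-- `opc a` for a coefficient vector `a`. -/
def opc {m : ℕ} (a : Fin m → ℤ) : ℤ :=
  ((Finset.univ.sup fun i => (a i).natAbs : ℕ) : ℤ)

/-!
Put `A = ∑ aᵢ αⁱ` and let `b` be `a` with `a₀` replaced by `a₀ - s r`, where `r` is `⌊A / s⌋` or
`⌈A / s⌉`. Then `|∑ bᵢ αⁱ| = |A - s r| ≤ s`, while `bᵢ = aᵢ` for `i ≥ 1`. Solving for `b₀` gives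
`|b₀| ≤ s + opc(a) (|α| + ⋯ + |α|^{m-1})`, and both terms are bounded via `M = max(opc a, s)`.
-/

lemma abs_sub_le_one_of_eq_floor_or_ceil {y : ℝ} {r : ℤ} (hr : r = ⌊y⌋ ∨ r = ⌈y⌉) :
    |y - r| ≤ 1 := by
  rw [abs_sub_le_iff]
  rcases hr with rfl | rfl
  · exact ⟨by linarith [Int.lt_floor_add_one y], by linarith [Int.floor_le y]⟩
  · exact ⟨by linarith [Int.le_ceil y], by linarith [Int.ceil_lt_add_one y]⟩

lemma abs_sub_mul_le_of_eq_floor_or_ceil {x s : ℝ} (hs : 0 < s) {r : ℤ}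
    (hr : r = ⌊x / s⌋ ∨ r = ⌈x / s⌉) : |x - s * r| ≤ s := by
  have hxs : x - s * r = s * (x / s - r) := by field_simp
  rw [hxs, abs_mul, abs_of_pos hs]
  exact mul_le_of_le_one_right hs.le (abs_sub_le_one_of_eq_floor_or_ceil hr)

lemma abs_le_opc {m : ℕ} (a : Fin m → ℤ) (i : Fin m) : |a i| ≤ opc a := by
  rw [Int.abs_eq_natAbs, opc, Nat.cast_le]
  exact Finset.le_sup (f := fun i => (a i).natAbs) (Finset.mem_univ i)

lemma opc_le_of_forall_abs_le {m : ℕ} {a : Fin m → ℤ} {B : ℝ} (hB : 0 ≤ B)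
    (h : ∀ i, |(a i : ℝ)| ≤ B) : (opc a : ℝ) ≤ B := by
  have hsup : (Finset.univ.sup fun i => (a i).natAbs) ≤ ⌊B⌋₊ :=
    Finset.sup_le fun i _ => by
      rw [Nat.le_floor_iff hB, Nat.cast_natAbs, Int.cast_abs]
      exact h i
  calc (opc a : ℝ) ≤ (⌊B⌋₊ : ℝ) := by rw [opc, Int.cast_natCast]; exact_mod_cast hsup
    _ ≤ B := Nat.floor_le hB

lemma one_le_Salpha {m : ℕ} (hm : 0 < m) (x : ℝ) : 1 ≤ Salpha m x := by
  simpa [Salpha] using Finset.single_le_sum (f := fun k => |x| ^ k) (fun k _ => by positivity)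
    (Finset.mem_range.mpr hm)

lemma Salpha_succ_eq_one_add_sum (n : ℕ) (x : ℝ) :
    Salpha (n + 1) x = 1 + ∑ i : Fin n, |x| ^ ((i : ℕ) + 1) := by
  rw [Salpha, Finset.sum_range_succ', Fin.sum_univ_eq_sum_range (fun k => |x| ^ (k + 1))]
  ring

lemma abs_sum_mul_pow_le {ι : Type*} (t : Finset ι) {c : ι → ℝ} (e : ι → ℕ) (x : ℝ) {M : ℝ}
    (hc : ∀ i ∈ t, |c i| ≤ M) : |∑ i ∈ t, c i * x ^ e i| ≤ M * ∑ i ∈ t, |x| ^ e i := by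
  rw [Finset.mul_sum]
  refine (Finset.abs_sum_le_sum_abs _ _).trans (Finset.sum_le_sum fun i hi => ?_)
  rw [abs_mul, abs_pow]
  exact mul_le_mul_of_nonneg_right (hc i hi) (by positivity)

lemma abs_coeff_zero_le {n : ℕ} (c : Fin (n + 1) → ℝ) (x : ℝ) {M : ℝ}
    (hc : ∀ i : Fin n, |c i.succ| ≤ M) (hsum : |∑ i, c i * x ^ (i : ℕ)| ≤ M) :
    |c 0| ≤ M * Salpha (n + 1) x := by
  set T := ∑ i : Fin n, c i.succ * x ^ ((i : ℕ) + 1)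
  have hc0 : c 0 = ∑ i, c i * x ^ (i : ℕ) - T := by
    rw [Fin.sum_univ_succ]; simp [T]
  have hT : |T| ≤ M * ∑ i : Fin n, |x| ^ ((i : ℕ) + 1) :=
    abs_sum_mul_pow_le _ _ x fun i _ => hc i
  rw [hc0, Salpha_succ_eq_one_add_sum, mul_add, mul_one]
  exact (abs_sub _ _).trans (add_le_add hsum hT)

lemma opc_update_zero_sub_mul_le {n : ℕ} (a : Fin (n + 1) → ℤ) (x : ℝ) (s r : ℤ)
    (hr : |∑ i, (a i : ℝ) * x ^ (i : ℕ) - s * r| ≤ s) :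
    (opc (Function.update a 0 (a 0 - s * r)) : ℝ) ≤ (max (opc a) s : ℤ) * Salpha (n + 1) x := by
  set b := Function.update a 0 (a 0 - s * r)
  set M : ℝ := ((max (opc a) s : ℤ) : ℝ)
  have hsM : (s : ℝ) ≤ M := Int.cast_le.mpr (le_max_right _ _)
  have hM : 0 ≤ M := (abs_nonneg _).trans (hr.trans hsM)
  have hS : 1 ≤ Salpha (n + 1) x := one_le_Salpha n.succ_pos x
  have hb_succ (i : Fin n) : |(b i.succ : ℝ)| ≤ M := by
    rw [← Int.cast_abs, show b i.succ = a i.succ from Function.update_of_ne i.succ_ne_zero ..]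
    exact Int.cast_le.mpr ((abs_le_opc a _).trans (le_max_left _ _))
  have hb_sum : ∑ i, (b i : ℝ) * x ^ (i : ℕ) = ∑ i, (a i : ℝ) * x ^ (i : ℕ) - s * r := by
    simp only [Fin.sum_univ_succ, b, Function.update_self,
      Function.update_of_ne (Fin.succ_ne_zero _), Fin.val_zero, pow_zero]
    push_cast
    ring
  have hb0 : |(b 0 : ℝ)| ≤ M * Salpha (n + 1) x :=
    abs_coeff_zero_le (fun i => (b i : ℝ)) x hb_succ (hb_sum ▸ hr.trans hsM)
  refine opc_le_of_forall_abs_le (by positivity) fun i => ?_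
  cases i using Fin.cases with
  | zero => exact hb0
  | succ i => exact (hb_succ i).trans (le_mul_of_one_le_right hM hS)

theorem stmt_8_general (m : ℕ) (hm : 0 < m)
    (α : ℝ)
    (a : Fin m → ℤ) (s : ℤ) (hs : 0 < s) :
    ∀ r : ℤ,
      (r = ⌊(∑ i, (a i : ℝ) * α ^ (i : ℕ)) / (s : ℝ)⌋ ∨
        r = ⌈(∑ i, (a i : ℝ) * α ^ (i : ℕ)) / (s : ℝ)⌉) →
      ((opc (Function.update a ⟨0, hm⟩ (a ⟨0, hm⟩ - s * r)) : ℤ) : ℝ) ≤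
        ((max (opc a) s : ℤ) : ℝ) * Salpha m α := by
  intro r hr
  obtain ⟨n, rfl⟩ := Nat.exists_eq_add_one_of_ne_zero hm.ne'
  exact opc_update_zero_sub_mul_le a α s r
    (abs_sub_mul_le_of_eq_floor_or_ceil (by exact_mod_cast hs) hr)

theorem stmt_8 (m : ℕ) (hm : 0 < m) (f : Polynomial ℤ)
    (hmonic : f.Monic) (hdeg : f.natDegree = m)
    (hirr : Irreducible (f.map (Int.castRingHom ℚ)))
    (α : ℝ) (hroot : Polynomial.aeval α f = 0)
    (a : Fin m → ℤ) (s : ℤ) (hs : 0 < s) :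
    ∀ r : ℤ,
      (r = ⌊(∑ i, (a i : ℝ) * α ^ (i : ℕ)) / (s : ℝ)⌋ ∨
        r = ⌈(∑ i, (a i : ℝ) * α ^ (i : ℕ)) / (s : ℝ)⌉) →
      ((opc (Function.update a ⟨0, hm⟩ (a ⟨0, hm⟩ - s * r)) : ℤ) : ℝ) ≤
        ((max (opc a) s : ℤ) : ℝ) * Salpha m α :=
  stmt_8_general m hm α a s hs
end

section
/- Let A be an n×n matrix (n ≥ 1) whose entries lie in ℤ[α], and suppose every entry a_{ij} satisfies opc(a_{ij}) ≤ L. Then the determinant of A, as an element of ℤ[α], satisfies opc(det A) ≤ n!·M_α^{n−1}·L^n, where M_α := m(1+‖f‖_∞)^{m−1}. In particular, every k×k minor of A (k ≤ n) satisfies the same bound. -/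
open Polynomial Finset

/-- `‖f‖_∞` over the coefficients `f_0, …, f_{m-1}`. -/
def fninf (m : ℕ) (f : Polynomial ℤ) : ℤ :=
  ((Finset.univ.sup fun i : Fin m => (f.coeff (i : ℕ)).natAbs : ℕ) : ℤ)

/-!
Represent elements of `ℤ[α]` by integer polynomials of degree `< m` and compute modulo `f`.
The product of two such polynomials with coefficients bounded by `A` and `B` has degree
`≤ 2m - 2` and coefficients bounded by `m A B`. Reducing it modulo `f` takes `m - 1` steps, each
cancelling the top coefficient `c` by subtracting `c X^j f`, and each step multiplies the
coefficient bound by at most `1 + ‖f‖_∞`. So a reduced product of `n` entries is bounded by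
`M_α^(n-1) L^n`, and the Leibniz expansion of the determinant contributes the factor `n!`.
The bound for `k × k` minors is increasing in `k`, since `M_α ≥ 1` and `L` is an integer.
-/

namespace Polynomial

theorem degree_mul_lt_of_degree_lt {R : Type*} [Semiring R] {a b : R[X]} {m n : ℕ}
    (ha : a.degree < m) (hb : b.degree < n) : (a * b).degree < ↑(m + n - 1) := by
  rcases eq_or_ne a 0 with rfl | ha0
  · simp
  rcases eq_or_ne b 0 with rfl | hb0
  · simp
  rw [← natDegree_lt_iff_degree_lt ha0] at ha
  rw [← natDegree_lt_iff_degree_lt hb0] at hb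
  exact degree_le_natDegree.trans_lt (by exact_mod_cast natDegree_mul_le.trans_lt (by omega))

theorem aeval_eq_sum_fin_of_degree_lt {R S : Type*} [CommSemiring R] [Semiring S] [Algebra R S]
    {p : R[X]} {m : ℕ} (hp : p.degree < m) (x : S) :
    aeval x p = ∑ i : Fin m, p.coeff i • x ^ (i : ℕ) := by
  rcases eq_or_ne p 0 with rfl | hp0
  · simp
  rw [aeval_eq_sum_range' ((natDegree_lt_iff_degree_lt hp0).2 hp),
    Fin.sum_univ_eq_sum_range (fun i => p.coeff i • x ^ i)]

theorem aeval_ofFn {R S : Type*} [CommSemiring R] [DecidableEq R] [Semiring S] [Algebra R S]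
    {m : ℕ} (v : Fin m → R) (x : S) : aeval x (ofFn m v) = ∑ i, v i • x ^ (i : ℕ) := by
  simp [ofFn_eq_sum_monomial, aeval_monomial, Algebra.smul_def]

section OrderedRing

variable {R : Type*} [CommRing R] [LinearOrder R] [IsStrictOrderedRing R] {f : R[X]} {F : R}

theorem abs_coeff_ofFn_le [DecidableEq R] {m : ℕ} {v : Fin m → R} {L : R} (hL0 : 0 ≤ L)
    (hv : ∀ i, |v i| ≤ L) (k : ℕ) : |(ofFn m v).coeff k| ≤ L := by
  rcases lt_or_ge k m with hk | hk
  · rw [ofFn_coeff_eq_val_of_lt v hk]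
    exact hv _
  · rwa [ofFn_coeff_eq_zero_of_ge v hk, abs_zero]

theorem abs_coeff_mul_le {a b : R[X]} {m : ℕ} {A B : R} (ha : a.degree < m)
    (hA : ∀ k, |a.coeff k| ≤ A) (hB : ∀ k, |b.coeff k| ≤ B) (k : ℕ) :
    |(a * b).coeff k| ≤ m * A * B := by
  have hB0 : 0 ≤ B := (abs_nonneg _).trans (hB 0)
  have ha_sum : a = ∑ i ∈ range m, C (a.coeff i) * X ^ i := by
    rcases eq_or_ne a 0 with rfl | ha0
    · simp
    simp_rw [C_mul_X_pow_eq_monomial]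
    exact as_sum_range' a m ((natDegree_lt_iff_degree_lt ha0).2 ha)
  calc |(a * b).coeff k| = |∑ i ∈ range m, a.coeff i * (X ^ i * b).coeff k| := by
        conv_lhs => rw [ha_sum]
        simp only [sum_mul, finsetSum_coeff, mul_assoc, coeff_C_mul]
    _ ≤ ∑ i ∈ range m, |a.coeff i| * B := by
        refine (abs_sum_le_sum_abs _ _).trans (sum_le_sum fun i _ => ?_)
        rw [abs_mul, coeff_X_pow_mul']
        split_ifs
        · exact mul_le_mul_of_nonneg_left (hB _) (abs_nonneg _)
        · simpa using mul_nonneg (abs_nonneg (a.coeff i)) hB0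
    _ ≤ ∑ _i ∈ range m, A * B := sum_le_sum fun i _ => mul_le_mul_of_nonneg_right (hA i) hB0
    _ = m * A * B := by rw [sum_const, card_range, nsmul_eq_mul, mul_assoc]

theorem abs_coeff_le_of_ne_natDegree (hF0 : 0 ≤ F) (hF : ∀ k < f.natDegree, |f.coeff k| ≤ F)
    {k : ℕ} (hk : k ≠ f.natDegree) : |f.coeff k| ≤ F := by
  rcases hk.lt_or_gt with hk | hk
  · exact hF k hk
  · rwa [coeff_eq_zero_of_natDegree_lt hk, abs_zero]

theorem abs_coeff_modByMonic_le (hf : f.Monic) (hF0 : 0 ≤ F)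
    (hF : ∀ k < f.natDegree, |f.coeff k| ≤ F) (j : ℕ) {p : R[X]} {B : R}
    (hp : p.degree < ↑(f.natDegree + j)) (hB : ∀ k, |p.coeff k| ≤ B) (k : ℕ) :
    |(p %ₘ f).coeff k| ≤ B * (1 + F) ^ j := by
  induction j generalizing p B with
  | zero =>
    rw [(modByMonic_eq_self_iff hf).2 (by rwa [degree_eq_natDegree hf.ne_zero]), pow_zero,
      mul_one]
    exact hB k
  | succ j ih =>
    have hB0 : 0 ≤ B := (abs_nonneg _).trans (hB 0)
    set c := p.coeff (f.natDegree + j)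
    set q := p - C c * X ^ j * f with hq
    have hqf : q %ₘ f = p %ₘ f := by
      rw [hq, sub_modByMonic, (modByMonic_eq_zero_iff_dvd hf).2 (dvd_mul_left f _), sub_zero]
    have hq_coeff (t : ℕ) : q.coeff t = p.coeff t - c * (X ^ j * f).coeff t := by
      rw [hq, coeff_sub, mul_assoc, coeff_C_mul]
    have hq_top : q.coeff (f.natDegree + j) = 0 := by
      rw [hq_coeff, coeff_X_pow_mul', if_pos (by omega), Nat.add_sub_cancel, hf.coeff_natDegree,
        mul_one, sub_self]
    have hq_deg : q.degree < ↑(f.natDegree + j) := by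
      rw [degree_lt_iff_coeff_zero]
      intro t ht
      rcases ht.eq_or_lt with rfl | ht
      · exact hq_top
      rw [hq_coeff, coeff_X_pow_mul', if_pos (by omega),
        coeff_eq_zero_of_natDegree_lt (p := f) (by omega),
        (degree_lt_iff_coeff_zero _ _).1 hp t (by omega), mul_zero, sub_zero]
    have hqB (t : ℕ) : |q.coeff t| ≤ B * (1 + F) := by
      rcases eq_or_ne t (f.natDegree + j) with rfl | ht
      · rw [hq_top, abs_zero]
        positivity
      have hXf : |(X ^ j * f).coeff t| ≤ F := by
        rw [coeff_X_pow_mul']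
        split_ifs
        · exact abs_coeff_le_of_ne_natDegree hF0 hF (by omega)
        · rwa [abs_zero]
      calc |q.coeff t| ≤ |p.coeff t| + |c| * |(X ^ j * f).coeff t| := by
            rw [hq_coeff, ← abs_mul]
            exact abs_sub _ _
        _ ≤ B + B * F := by gcongr; exacts [hB t, hB _]
        _ = B * (1 + F) := by ring
    rw [← hqf, pow_succ', ← mul_assoc]
    exact ih hq_deg hqB

theorem abs_coeff_mul_modByMonic_le (hf : f.Monic) (hF0 : 0 ≤ F)
    (hF : ∀ k < f.natDegree, |f.coeff k| ≤ F) {a b : R[X]} {A B : R}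
    (ha : a.degree < f.natDegree) (hb : b.degree < f.natDegree)
    (hA : ∀ k, |a.coeff k| ≤ A) (hB : ∀ k, |b.coeff k| ≤ B) (k : ℕ) :
    |((a * b) %ₘ f).coeff k| ≤ f.natDegree * (1 + F) ^ (f.natDegree - 1) * A * B := by
  have hab : (a * b).degree < ↑(f.natDegree + (f.natDegree - 1)) := by
    have := degree_mul_lt_of_degree_lt ha hb
    rwa [show f.natDegree + f.natDegree - 1 = f.natDegree + (f.natDegree - 1) by omega] at this
  calc |((a * b) %ₘ f).coeff k| ≤ f.natDegree * A * B * (1 + F) ^ (f.natDegree - 1) :=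
        abs_coeff_modByMonic_le hf hF0 hF _ hab (abs_coeff_mul_le ha hA hB) k
    _ = _ := by ring

theorem abs_coeff_prod_modByMonic_le (hf : f.Monic) (hF0 : 0 ≤ F)
    (hF : ∀ k < f.natDegree, |f.coeff k| ≤ F) {ι : Type*} {s : Finset ι} (hs : s.Nonempty)
    {p : ι → R[X]} {L : R} (hp : ∀ i ∈ s, (p i).degree < f.natDegree)
    (hL : ∀ i ∈ s, ∀ k, |(p i).coeff k| ≤ L) (k : ℕ) :
    |((∏ i ∈ s, p i) %ₘ f).coeff k| ≤
      (f.natDegree * (1 + F) ^ (f.natDegree - 1)) ^ (#s - 1) * L ^ #s := by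
  have hp_mod {q : R[X]} (hq : q.degree < f.natDegree) : q %ₘ f = q :=
    (modByMonic_eq_self_iff hf).2 (by rwa [degree_eq_natDegree hf.ne_zero])
  induction hs using Finset.Nonempty.cons_induction generalizing k with
  | singleton a =>
    rw [prod_singleton, hp_mod (hp a (mem_singleton_self a))]
    simpa using hL a (mem_singleton_self a) k
  | cons a s ha hs ih =>
    rw [prod_cons, mul_modByMonic, hp_mod (hp a (mem_cons_self a s))]
    refine (abs_coeff_mul_modByMonic_le hf hF0 hF (hp a (mem_cons_self a s))
      ((degree_modByMonic_lt _ hf).trans_eq (degree_eq_natDegree hf.ne_zero))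
      (hL a (mem_cons_self a s)) (ih (fun i hi => hp i (mem_cons_of_mem hi))
        (fun i hi => hL i (mem_cons_of_mem hi))) k).trans_eq ?_
    obtain ⟨c, hc⟩ : ∃ c, #s = c + 1 := ⟨#s - 1, (Nat.succ_pred_eq_of_pos hs.card_pos).symm⟩
    rw [card_cons, hc, Nat.add_sub_cancel, Nat.add_sub_cancel]
    ring

theorem abs_coeff_det_modByMonic_le (hf : f.Monic) (hF0 : 0 ≤ F)
    (hF : ∀ k < f.natDegree, |f.coeff k| ≤ F) {ι : Type*} [Fintype ι] [DecidableEq ι]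
    [Nonempty ι] {P : Matrix ι ι R[X]} {L : R} (hP : ∀ i j, (P i j).degree < f.natDegree)
    (hL : ∀ i j k, |(P i j).coeff k| ≤ L) (k : ℕ) :
    |(P.det %ₘ f).coeff k| ≤ (Fintype.card ι).factorial *
      (f.natDegree * (1 + F) ^ (f.natDegree - 1)) ^ (Fintype.card ι - 1) * L ^ Fintype.card ι := by
  have hdet : P.det %ₘ f = ∑ σ : Equiv.Perm ι,
      (Equiv.Perm.sign σ : ℤ) • ((∏ i, P (σ i) i) %ₘ f) := by
    rw [Matrix.det_apply]
    exact map_sum (modByMonicHom f) _ _ |>.trans (sum_congr rfl fun σ _ => by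
      rw [Units.smul_def, map_zsmul]; rfl)
  rw [hdet, finsetSum_coeff]
  calc |∑ σ : Equiv.Perm ι, ((Equiv.Perm.sign σ : ℤ) • ((∏ i, P (σ i) i) %ₘ f)).coeff k|
      ≤ ∑ σ : Equiv.Perm ι, |((∏ i, P (σ i) i) %ₘ f).coeff k| := by
        refine (abs_sum_le_sum_abs _ _).trans (sum_le_sum fun σ _ => ?_)
        rw [coeff_smul, abs_zsmul, Int.isUnit_iff_abs_eq.1 (Equiv.Perm.sign σ).isUnit, one_smul]
    _ ≤ ∑ _σ : Equiv.Perm ι, (f.natDegree * (1 + F) ^ (f.natDegree - 1)) ^ (Fintype.card ι - 1) *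
          L ^ Fintype.card ι := by
        refine sum_le_sum fun σ _ => ?_
        simpa using abs_coeff_prod_modByMonic_le hf hF0 hF univ_nonempty (fun i _ => hP (σ i) i)
          (fun i _ => hL (σ i) i) k
    _ = _ := by rw [sum_const, card_univ, Fintype.card_perm, nsmul_eq_mul, mul_assoc]

end OrderedRing

theorem exists_fin_coeffs_det_eq {S : Type*} [CommRing S] {f : ℤ[X]} (hf : f.Monic) {α : S}
    (hroot : aeval α f = 0) {F : ℤ} (hF0 : 0 ≤ F) (hF : ∀ k < f.natDegree, |f.coeff k| ≤ F)
    {ι : Type*} [Fintype ι] [DecidableEq ι] [Nonempty ι] (B : Matrix ι ι (Fin f.natDegree → ℤ))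
    {L : ℤ} (hL0 : 0 ≤ L) (hL : ∀ i j t, |B i j t| ≤ L) :
    ∃ c : Fin f.natDegree → ℤ,
      ∑ t, (c t : S) * α ^ (t : ℕ) = (B.map fun v => ∑ t, (v t : S) * α ^ (t : ℕ)).det ∧
      ∀ t, |c t| ≤ (Fintype.card ι).factorial *
        (f.natDegree * (1 + F) ^ (f.natDegree - 1)) ^ (Fintype.card ι - 1) *
          L ^ Fintype.card ι := by
  set D := (B.map (ofFn f.natDegree)).det %ₘ f
  refine ⟨fun t => D.coeff t, ?_, fun t => abs_coeff_det_modByMonic_le hf hF0 hF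
    (fun i j => ofFn_degree_lt _) (fun i j => abs_coeff_ofFn_le hL0 (hL i j)) t⟩
  calc ∑ t : Fin f.natDegree, (D.coeff t : S) * α ^ (t : ℕ) = aeval α D := by
        rw [aeval_eq_sum_fin_of_degree_lt ((degree_modByMonic_lt _ hf).trans_eq
          (degree_eq_natDegree hf.ne_zero))]
        simp only [zsmul_eq_mul]
        rfl
    _ = _ := by
        rw [aeval_modByMonic_eq_self_of_root hroot, AlgHom.map_det]
        congr 1
        ext i j
        simp [aeval_ofFn, zsmul_eq_mul]

end Polynomial

theorem natCast_sup_natAbs_le_iff {ι : Type*} [Fintype ι] (c : ι → ℤ) {N : ℤ} (hN : 0 ≤ N) :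
    ((univ.sup fun i => (c i).natAbs : ℕ) : ℤ) ≤ N ↔ ∀ i, |c i| ≤ N := by
  lift N to ℕ using hN
  simp only [Nat.cast_le, Finset.sup_le_iff, mem_univ, true_implies, Int.abs_eq_natAbs]

theorem abs_coeff_le_fninf {m : ℕ} (f : ℤ[X]) {k : ℕ} (hk : k < m) : |f.coeff k| ≤ fninf m f :=
  (natCast_sup_natAbs_le_iff (fun i : Fin m => f.coeff i) (Int.natCast_nonneg _)).1 le_rfl ⟨k, hk⟩

theorem factorial_mul_pow_mul_pow_le {M L : ℤ} (hM : 1 ≤ M) (hL : 0 ≤ L) {k n : ℕ}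
    (hk : 1 ≤ k) (hkn : k ≤ n) :
    (k.factorial : ℤ) * M ^ (k - 1) * L ^ k ≤ n.factorial * M ^ (n - 1) * L ^ n := by
  rcases hL.eq_or_lt with rfl | hL
  · simp [zero_pow (by omega : k ≠ 0), zero_pow (by omega : n ≠ 0)]
  gcongr

theorem stmt_10_general (m : ℕ) (hm : 1 ≤ m) (f : Polynomial ℤ)
    (hmonic : f.Monic) (hdeg : f.natDegree = m)
    (α : ℝ) (hroot : Polynomial.aeval α f = 0)
    (n : ℕ) (hn : 1 ≤ n)
    (A : Matrix (Fin n) (Fin n) (Fin m → ℤ)) (L : ℤ)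
    (hL : ∀ i j, ((Finset.univ.sup fun k => (A i j k).natAbs : ℕ) : ℤ) ≤ L) :
    (∃ c : Fin m → ℤ,
        (∑ k, (c k : ℝ) * α ^ (k : ℕ)) =
          (Matrix.of fun i j : Fin n => ∑ k, (A i j k : ℝ) * α ^ (k : ℕ)).det ∧
        ((Finset.univ.sup fun k => (c k).natAbs : ℕ) : ℤ) ≤
          (n.factorial : ℤ) * ((m : ℤ) * (1 + fninf m f) ^ (m - 1)) ^ (n - 1) * L ^ n) ∧
      ∀ (k : ℕ), 1 ≤ k → ∀ (r c' : Fin k → Fin n),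
        Function.Injective r → Function.Injective c' →
        ∃ cc : Fin m → ℤ,
          (∑ t, (cc t : ℝ) * α ^ (t : ℕ)) =
            ((Matrix.of fun i j : Fin n =>
              ∑ k', (A i j k' : ℝ) * α ^ (k' : ℕ)).submatrix r c').det ∧
          ((Finset.univ.sup fun t => (cc t).natAbs : ℕ) : ℤ) ≤
            (n.factorial : ℤ) * ((m : ℤ) * (1 + fninf m f) ^ (m - 1)) ^ (n - 1) * L ^ n := by
  classical
  subst hdeg
  have hL0 : 0 ≤ L := (Int.natCast_nonneg _).trans (hL ⟨0, hn⟩ ⟨0, hn⟩)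
  have hM : (1 : ℤ) ≤ f.natDegree * (1 + fninf f.natDegree f) ^ (f.natDegree - 1) :=
    one_le_mul_of_one_le_of_one_le (by exact_mod_cast hm)
      (one_le_pow₀ (le_add_of_nonneg_right (Int.natCast_nonneg _)))
  have minor : ∀ (k : ℕ), 1 ≤ k → ∀ (r c' : Fin k → Fin n),
      Function.Injective r → Function.Injective c' → ∃ cc : Fin f.natDegree → ℤ,
        (∑ t, (cc t : ℝ) * α ^ (t : ℕ)) = ((Matrix.of fun i j : Fin n =>
          ∑ k', (A i j k' : ℝ) * α ^ (k' : ℕ)).submatrix r c').det ∧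
        ((univ.sup fun t => (cc t).natAbs : ℕ) : ℤ) ≤ (n.factorial : ℤ) *
          (f.natDegree * (1 + fninf f.natDegree f) ^ (f.natDegree - 1)) ^ (n - 1) * L ^ n := by
    intro k hk r c' hr _
    have : Nonempty (Fin k) := ⟨⟨0, hk⟩⟩
    obtain ⟨cc, hcc, hbound⟩ := exists_fin_coeffs_det_eq hmonic hroot (F := fninf _ f)
      (Int.natCast_nonneg _) (fun _ => abs_coeff_le_fninf f) (A.submatrix r c') hL0
      (fun i j => (natCast_sup_natAbs_le_iff _ hL0).1 (hL (r i) (c' j)))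
    refine ⟨cc, hcc, (natCast_sup_natAbs_le_iff _ (by positivity)).2 fun t => (hbound t).trans ?_⟩
    have hkn : k ≤ n := by simpa using Fintype.card_le_of_injective r hr
    simpa using factorial_mul_pow_mul_pow_le hM hL0 hk hkn
  exact ⟨by simpa using minor n hn id id Function.injective_id Function.injective_id, minor⟩

theorem stmt_10 (m : ℕ) (hm : 1 ≤ m) (f : Polynomial ℤ)
    (hmonic : f.Monic) (hdeg : f.natDegree = m)
    (hirr : Irreducible (f.map (Int.castRingHom ℚ)))
    (α : ℝ) (hroot : Polynomial.aeval α f = 0)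
    (n : ℕ) (hn : 1 ≤ n)
    (A : Matrix (Fin n) (Fin n) (Fin m → ℤ)) (L : ℤ)
    (hL : ∀ i j, ((Finset.univ.sup fun k => (A i j k).natAbs : ℕ) : ℤ) ≤ L) :
    (∃ c : Fin m → ℤ,
        (∑ k, (c k : ℝ) * α ^ (k : ℕ)) =
          (Matrix.of fun i j : Fin n => ∑ k, (A i j k : ℝ) * α ^ (k : ℕ)).det ∧
        ((Finset.univ.sup fun k => (c k).natAbs : ℕ) : ℤ) ≤
          (n.factorial : ℤ) * ((m : ℤ) * (1 + fninf m f) ^ (m - 1)) ^ (n - 1) * L ^ n) ∧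
      ∀ (k : ℕ), 1 ≤ k → ∀ (r c' : Fin k → Fin n),
        Function.Injective r → Function.Injective c' →
        ∃ cc : Fin m → ℤ,
          (∑ t, (cc t : ℝ) * α ^ (t : ℕ)) =
            ((Matrix.of fun i j : Fin n =>
              ∑ k', (A i j k' : ℝ) * α ^ (k' : ℕ)).submatrix r c').det ∧
          ((Finset.univ.sup fun t => (cc t).natAbs : ℕ) : ℤ) ≤
            (n.factorial : ℤ) * ((m : ℤ) * (1 + fninf m f) ^ (m - 1)) ^ (n - 1) * L ^ n :=
  stmt_10_general m hm f hmonic hdeg α hroot n hn A L hL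
end
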